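/- Let t = t_0 < t_1 < ⋯ < t_{n+1} = T and let Z_0, …, Z_n be bounded random variables with Z_i F_{t_i}-measurable. Then, P-almost surely, E_P[ Σ_{i=0}^n Z_i 1_{t_i < τ ≤ t_{i+1}} | G_t ] = − 1_{τ > t} · E_P[ Σ_{i=0}^n Z_i (S_{t_{i+1}} − S_{t_i}) | F_t ] / S_t, where the right-hand side is taken to be 0 on {τ ≤ t} (note that P(τ > t, S_t = 0) = 0). (The recovery-payment term of the value process formula of Proposition 4.1 for stepwise F-predictable recovery processes.) -/

import Mathlib

/-!
On `{τ > t}` every `G_t`-measurable set agrees with an `F_t`-measurable one, which gives the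
key lemma `E[Y | G_t] = 1_{τ > t} E[Y | F_t] / S_t` for bounded `Y` vanishing on `{τ ≤ t}`.
The recovery payment is `Y = Σ Z_i (1_{τ > t_i} - 1_{τ > t_{i+1}})`; conditioning first on
`F_u ⊇ F_t` and pulling out the `F_u`-measurable `Z_i` replaces each `1_{τ > u}` by `S_u`
inside `E[· | F_t]`, which turns `E[Y | F_t]` into `-E[Σ Z_i (S_{t_{i+1}} - S_{t_i}) | F_t]`.
-/

open MeasureTheory ProbabilityTheory Set
open scoped NNReal Classical

noncomputable section

/-- Running infimum `X*_t = inf_{s ≤ t} X_s` of the process `X` over the time interval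
`[0, t]`. -/
def runInf {Ω : Type*} (X : ℝ≥0 → Ω → ℝ) (t : ℝ≥0) (ω : Ω) : ℝ :=
  ⨅ s : Set.Icc (0 : ℝ≥0) t, X s.1 ω

/-- The σ-algebra `σ({τ ≤ s} : s ≤ t)` generated by the default observations up to time
`t`. -/
def defaultSigma {Ω : Type*} (τ : Ω → ℝ≥0) (t : ℝ≥0) : MeasurableSpace Ω :=
  MeasurableSpace.generateFrom {A | ∃ s ≤ t, A = {ω | τ ω ≤ s}}

/-- The Azéma supermartingale `S_t = P(τ > t | F_t)` of `τ`. -/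
def azema {Ω : Type*} [m0 : MeasurableSpace Ω] (P : Measure Ω) (F : Filtration ℝ≥0 m0)
    (τ : Ω → ℝ≥0) (t : ℝ≥0) : Ω → ℝ :=
  P[fun ω => if t < τ ω then (1 : ℝ) else 0|F t]

section RunningInfimum

variable {Ω : Type*} {X : ℝ≥0 → Ω → ℝ}

lemma runInf_eq_iInf_of_dense (hX_cont : ∀ ω, Continuous fun s => X s ω) {θ : ℝ≥0}
    {D : Set (Icc (0 : ℝ≥0) θ)} (hD : Dense D) (ω : Ω) :
    runInf X θ ω = ⨅ d : D, X d.1.1 ω := by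
  have : Nonempty (Icc (0 : ℝ≥0) θ) := ⟨⟨0, le_rfl, zero_le⟩⟩
  have : Nonempty D := hD.nonempty.to_subtype
  set f : Icc (0 : ℝ≥0) θ → ℝ := fun s => X s.1 ω
  have hf : Continuous f := (hX_cont ω).comp continuous_subtype_val
  have hbdd : BddBelow (range f) := (isCompact_range hf).bddBelow
  have hbddD : BddBelow (range fun d : D => f d) :=
    hbdd.mono (range_subset_iff.2 fun d => mem_range_self d.1)
  refine le_antisymm (le_ciInf fun d => ciInf_le hbdd d.1) (le_ciInf fun s => ?_)
  obtain ⟨u, hu_mem, hu_lim⟩ := mem_closure_iff_seq_limit.1 (hD s)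
  exact ge_of_tendsto' ((hf.tendsto s).comp hu_lim) fun k => ciInf_le hbddD ⟨u k, hu_mem k⟩

lemma measurable_runInf [MeasurableSpace Ω] (hX : ∀ s, Measurable (X s))
    (hX_cont : ∀ ω, Continuous fun s => X s ω) (θ : ℝ≥0) : Measurable (runInf X θ) := by
  obtain ⟨D, hD_count, hD_dense⟩ :=
    TopologicalSpace.exists_countable_dense (Icc (0 : ℝ≥0) θ)
  have : Countable D := hD_count.to_subtype
  rw [funext (runInf_eq_iInf_of_dense hX_cont hD_dense)]
  exact .iInf fun d => hX d.1.1

lemma measurable_of_lt_iff_lt_runInf [MeasurableSpace Ω] (hX : ∀ s, Measurable (X s))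
    (hX_cont : ∀ ω, Continuous fun s => X s ω) {L : Ω → ℝ} (hL : Measurable L) {τ : Ω → ℝ≥0}
    (hτ : ∀ θ ω, θ < τ ω ↔ L ω < runInf X θ ω) : Measurable τ := by
  refine measurable_of_Ioi fun θ => ?_
  have : τ ⁻¹' Ioi θ = {ω | L ω < runInf X θ ω} := by ext ω; exact hτ θ ω
  rw [this]
  exact measurableSet_lt hL (measurable_runInf hX hX_cont θ)

end RunningInfimum

lemma div_mul_cancel_of_abs_le_mul {a b C : ℝ} (hb : 0 ≤ b) (h : |a| ≤ C * b) :
    a / b * b = a := by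
  rcases hb.eq_or_lt with rfl | hb
  · rw [mul_zero, abs_nonpos_iff] at h
    simp [h]
  · exact div_mul_cancel₀ a hb.ne'

-- `|C|`, not `C`: for `b = 0` the hypothesis does not force `0 ≤ C`, while `a / 0 = 0`.
lemma abs_div_le_abs_of_abs_le_mul {a b C : ℝ} (hb : 0 ≤ b) (h : |a| ≤ C * b) :
    |a / b| ≤ |C| := by
  rcases hb.eq_or_lt with rfl | hb
  · simp
  · rw [abs_div, abs_of_pos hb, div_le_iff₀ hb]
    exact h.trans (mul_le_mul_of_nonneg_right (le_abs_self C) hb.le)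

section Conditioning

variable {Ω : Type*} {m m' : MeasurableSpace Ω} [m0 : MeasurableSpace Ω] {P : Measure Ω}

lemma ae_eq_zero_of_condExp_eq_zero (hm : m ≤ m0) [SigmaFinite (P.trim hm)] {f : Ω → ℝ}
    (hf_nonneg : 0 ≤ᵐ[P] f) (hf : Integrable f P) :
    ∀ᵐ ω ∂P, P[f|m] ω = 0 → f ω = 0 := by
  have hs : MeasurableSet[m] {ω | P[f|m] ω = 0} :=
    stronglyMeasurable_condExp.measurable (measurableSet_singleton 0)
  have hint : ∫ ω in {ω | P[f|m] ω = 0}, f ω ∂P = 0 := by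
    rw [← setIntegral_condExp hm hf hs, setIntegral_congr_fun (hm _ hs) fun ω hω => hω]
    simp
  rw [setIntegral_eq_zero_iff_of_nonneg_ae (ae_restrict_of_ae hf_nonneg) hf.integrableOn]
    at hint
  exact (ae_restrict_iff' (hm _ hs)).1 hint

lemma integrable_mul_of_abs_le {Z g : Ω → ℝ} (hZ : Measurable Z) {C : ℝ}
    (hZ_bdd : ∀ ω, |Z ω| ≤ C) (hg : Integrable g P) : Integrable (fun ω => Z ω * g ω) P :=
  hg.bdd_mul hZ.aestronglyMeasurable (.of_forall hZ_bdd)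

lemma abs_condExp_le_mul_condExp [IsFiniteMeasure P] {Y g : Ω → ℝ}
    (hY : Integrable Y P) (hg : Integrable g P) {C : ℝ} (hYg : ∀ ω, |Y ω| ≤ C * g ω) :
    ∀ᵐ ω ∂P, |P[Y|m] ω| ≤ C * P[g|m] ω := by
  filter_upwards [abs_condExp_ae_le_condExp_abs (μ := P) (m := m) Y,
    condExp_mono (m := m) hY.abs (hg.const_mul C) (.of_forall hYg),
    condExp_smul (μ := P) C g m] with ω h_abs h_mono h_smul
  exact h_abs.trans (h_mono.trans_eq h_smul)

lemma condExp_mul_sub_condExp_ae_eq_zero [IsFiniteMeasure P] (hmm' : m ≤ m') (hm' : m' ≤ m0)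
    {Z f : Ω → ℝ} (hZ : StronglyMeasurable[m'] Z) {C : ℝ}
    (hZ_bdd : ∀ ω, |Z ω| ≤ C) (hf : Integrable f P) :
    P[fun ω => Z ω * (f ω - P[f|m'] ω)|m] =ᵐ[P] 0 := by
  have hint : Integrable (f - P[f|m']) P := hf.sub integrable_condExp
  have hcentered : P[f - P[f|m']|m'] =ᵐ[P] 0 := by
    filter_upwards [condExp_sub (m := m') hf (integrable_condExp (m := m') (f := f))]
      with ω hω
    rw [hω, condExp_of_stronglyMeasurable hm' stronglyMeasurable_condExp integrable_condExp,
      sub_self]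
  calc P[fun ω => Z ω * (f ω - P[f|m'] ω)|m]
      =ᵐ[P] P[P[Z * (f - P[f|m'])|m']|m] := (condExp_condExp_of_le hmm' hm').symm
    _ =ᵐ[P] P[0|m] := by
        refine condExp_congr_ae ?_
        filter_upwards [condExp_stronglyMeasurable_mul_of_bound hm' hZ hint C
          (.of_forall hZ_bdd), hcentered] with ω h_pull h_zero
        rw [h_pull, Pi.mul_apply, h_zero, Pi.zero_apply, mul_zero]
    _ = 0 := condExp_zero

end Conditioning

section DefaultTime

variable {Ω : Type*} {τ : Ω → ℝ≥0}

def survival (τ : Ω → ℝ≥0) (t : ℝ≥0) : Ω → ℝ := fun ω => if t < τ ω then 1 else 0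

lemma survival_eq_indicator (t : ℝ≥0) : survival τ t = {ω | t < τ ω}.indicator 1 := by
  ext ω
  by_cases h : t < τ ω <;> simp [survival, h]

lemma survival_nonneg (t : ℝ≥0) (ω : Ω) : 0 ≤ survival τ t ω := by
  unfold survival; split_ifs <;> norm_num

lemma measurable_survival {mΩ : MeasurableSpace Ω} {t : ℝ≥0}
    (h : MeasurableSet[mΩ] {ω | t < τ ω}) : Measurable[mΩ] (survival τ t) :=
  .ite h measurable_const measurable_const

lemma measurableSet_defaultSigma_lt (t : ℝ≥0) :
    MeasurableSet[defaultSigma τ t] {ω | t < τ ω} := by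
  have h : MeasurableSet[defaultSigma τ t] {ω | τ ω ≤ t} :=
    MeasurableSpace.measurableSet_generateFrom ⟨t, le_rfl, rfl⟩
  simpa only [compl_ofPred, not_le] using h.compl

lemma exists_inter_eq_of_measurableSet_sup_defaultSigma {m : MeasurableSpace Ω} {t : ℝ≥0}
    {A : Set Ω} (hA : MeasurableSet[m ⊔ defaultSigma τ t] A) :
    ∃ B, MeasurableSet[m] B ∧ A ∩ {ω | t < τ ω} = B ∩ {ω | t < τ ω} := by
  let E := {ω | t < τ ω}
  have hle : m ⊔ defaultSigma τ t ≤ (m.comap ((↑) : E → Ω)).map (↑) := by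
    refine sup_le MeasurableSpace.le_map_comap (MeasurableSpace.generateFrom_le ?_)
    rintro _ ⟨s, hs, rfl⟩
    have : ((↑) : E → Ω) ⁻¹' {ω | τ ω ≤ s} = ∅ :=
      eq_empty_of_forall_notMem fun ω hω => not_le.2 ω.2 (le_trans hω hs)
    change MeasurableSet[m.comap _] _
    rw [this]
    exact MeasurableSet.empty
  obtain ⟨B, hB, hBA⟩ := hle A hA
  refine ⟨B, hB, ?_⟩
  rw [inter_comm, inter_comm B]
  exact (Subtype.preimage_coe_eq_preimage_coe_iff.1 hBA).symm

variable {m : MeasurableSpace Ω} [m0 : MeasurableSpace Ω] {P : Measure Ω}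

lemma integrable_survival [IsFiniteMeasure P] (hτ : Measurable τ) (t : ℝ≥0) :
    Integrable (survival τ t) P := by
  rw [survival_eq_indicator]
  exact (integrable_const 1).indicator (hτ measurableSet_Ioi)

lemma measure_lt_and_azema_eq_zero [IsFiniteMeasure P] (F : Filtration ℝ≥0 m0)
    (hτ : Measurable τ) (t : ℝ≥0) : P {ω | t < τ ω ∧ azema P F τ t ω = 0} = 0 := by
  have h := ae_eq_zero_of_condExp_eq_zero (F.le t) (.of_forall (survival_nonneg t))
    (integrable_survival (P := P) hτ t)
  rw [ae_iff] at h
  refine measure_mono_null (fun ω ⟨hlt, hzero⟩ => ?_) h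
  exact fun himp => by simpa [survival, hlt] using himp hzero

lemma defaultSigma_le (hτ : Measurable τ) (t : ℝ≥0) : defaultSigma τ t ≤ m0 :=
  MeasurableSpace.generateFrom_le fun _ ⟨_, _, hA⟩ => hA ▸ hτ measurableSet_Iic

lemma setIntegral_eq_of_measurableSet_sup_defaultSigma (hτ : Measurable τ) {t : ℝ≥0}
    {f g : Ω → ℝ} (hf : ∀ ω, τ ω ≤ t → f ω = 0) (hg : ∀ ω, τ ω ≤ t → g ω = 0)
    (hfg : ∀ B, MeasurableSet[m] B → ∫ ω in B, f ω ∂P = ∫ ω in B, g ω ∂P) {A : Set Ω}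
    (hA : MeasurableSet[m ⊔ defaultSigma τ t] A) :
    ∫ ω in A, f ω ∂P = ∫ ω in A, g ω ∂P := by
  obtain ⟨B, hB, hAB⟩ := exists_inter_eq_of_measurableSet_sup_defaultSigma hA
  have hE : MeasurableSet {ω | t < τ ω} := hτ measurableSet_Ioi
  have htrace : ∀ h : Ω → ℝ, (∀ ω, τ ω ≤ t → h ω = 0) →
      ∫ ω in A, h ω ∂P = ∫ ω in B, h ω ∂P := by
    intro h hh
    have hind : {ω | t < τ ω}.indicator h = h :=
      indicator_eq_self.2 fun ω hω => not_le.1 fun hle => hω (hh ω hle)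
    rw [← hind, setIntegral_indicator hE, setIntegral_indicator hE, hAB]
  rw [htrace f hf, htrace g hg, hfg B hB]

theorem condExp_sup_defaultSigma_ae_eq [IsFiniteMeasure P] (hm : m ≤ m0) (hτ : Measurable τ)
    {t : ℝ≥0} {Y : Ω → ℝ} (hY : Measurable Y) {C : ℝ} (hY_bdd : ∀ ω, |Y ω| ≤ C)
    (hY_zero : ∀ ω, τ ω ≤ t → Y ω = 0) :
    P[Y|m ⊔ defaultSigma τ t] =ᵐ[P]
      fun ω => if t < τ ω then P[Y|m] ω / P[survival τ t|m] ω else 0 := by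
  set N := P[Y|m]
  set S := P[survival τ t|m]
  have hY_int : Integrable Y P := .of_bound hY.aestronglyMeasurable C (.of_forall hY_bdd)
  have hNS : ∀ᵐ ω ∂P, |N ω| ≤ C * S ω := by
    refine abs_condExp_le_mul_condExp hY_int (integrable_survival hτ t) fun ω => ?_
    by_cases h : t < τ ω
    · simpa [survival, h] using hY_bdd ω
    · simp [survival, h, hY_zero ω (not_lt.1 h)]
  have hS_nonneg : 0 ≤ᵐ[P] S := condExp_nonneg (.of_forall (survival_nonneg t))
  set W : Ω → ℝ := fun ω => N ω / S ω
  have hW : StronglyMeasurable[m] W :=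
    (stronglyMeasurable_condExp.measurable.div
      stronglyMeasurable_condExp.measurable).stronglyMeasurable
  have hW_bdd : ∀ᵐ ω ∂P, ‖W ω‖ ≤ |C| := by
    filter_upwards [hNS, hS_nonneg] with ω h hS
    exact abs_div_le_abs_of_abs_le_mul hS h
  have hWS_int : Integrable (W * survival τ t) P :=
    (integrable_survival hτ t).bdd_mul (hW.mono hm).aestronglyMeasurable hW_bdd
  have hWS_zero : ∀ ω, τ ω ≤ t → (W * survival τ t) ω = 0 := fun ω h => by
    simp [survival, not_lt.2 h]
  have hcand : (fun ω => if t < τ ω then N ω / S ω else 0) = W * survival τ t := by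
    ext ω
    by_cases h : t < τ ω <;> simp [W, survival, h]
  rw [hcand]
  refine (ae_eq_condExp_of_forall_setIntegral_eq (sup_le hm (defaultSigma_le hτ t)) hY_int
    (fun _ _ _ => hWS_int.integrableOn) (fun A hA _ => ?_) ?_).symm
  · refine setIntegral_eq_of_measurableSet_sup_defaultSigma hτ hWS_zero hY_zero
      (fun B hB => ?_) hA
    have hpull : P[W * survival τ t|m] =ᵐ[P] N := by
      filter_upwards [condExp_stronglyMeasurable_mul_of_bound hm hW (integrable_survival hτ t)
        |C| hW_bdd, hNS, hS_nonneg] with ω h_pull h hS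
      exact h_pull.trans (div_mul_cancel_of_abs_le_mul hS h)
    calc ∫ ω in B, (W * survival τ t) ω ∂P = ∫ ω in B, P[W * survival τ t|m] ω ∂P :=
          (setIntegral_condExp hm hWS_int hB).symm
      _ = ∫ ω in B, N ω ∂P := setIntegral_congr_ae (hm _ hB) (hpull.mono fun _ h _ => h)
      _ = ∫ ω in B, Y ω ∂P := setIntegral_condExp hm hY_int hB
  · have hE : MeasurableSet[m ⊔ defaultSigma τ t] {ω | t < τ ω} :=
      le_sup_right (a := m) _ (measurableSet_defaultSigma_lt t)
    exact ((hW.mono (le_sup_left : m ≤ m ⊔ defaultSigma τ t)).mul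
      (measurable_survival hE).stronglyMeasurable).aestronglyMeasurable

end DefaultTime

section RecoveryPayment

variable {Ω : Type*} {n : ℕ} (ts : Fin (n + 2) → ℝ≥0) (Z : Fin (n + 1) → Ω → ℝ) (τ : Ω → ℝ≥0)

def recoveryPayment : Ω → ℝ :=
  fun ω => ∑ i, Z i ω * (if ts i.castSucc < τ ω ∧ τ ω ≤ ts i.succ then 1 else 0)

variable {ts Z τ}

lemma recoveryPayment_eq_sum_survival (hts : Monotone ts) :
    recoveryPayment ts Z τ =
      fun ω => ∑ i, Z i ω * (survival τ (ts i.castSucc) ω - survival τ (ts i.succ) ω) := by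
  ext ω
  refine Finset.sum_congr rfl fun i _ => congrArg (Z i ω * ·) ?_
  by_cases h₂ : ts i.succ < τ ω
  · have h₁ : ts i.castSucc < τ ω := (hts (Fin.castSucc_le_succ i)).trans_lt h₂
    simp [survival, h₁, h₂, not_le.2 h₂]
  · by_cases h₁ : ts i.castSucc < τ ω <;> simp [survival, h₁, h₂, not_lt.1 h₂]

lemma recoveryPayment_eq_zero_of_le (hts : Monotone ts) {ω : Ω} (hω : τ ω ≤ ts 0) :
    recoveryPayment ts Z τ ω = 0 :=
  Finset.sum_eq_zero fun i _ => by
    have : ¬ ts i.castSucc < τ ω := not_lt.2 (hω.trans (hts (Fin.zero_le _)))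
    simp [this]

lemma abs_recoveryPayment_le {C : Fin (n + 1) → ℝ} (hZ_bdd : ∀ i ω, |Z i ω| ≤ C i) (ω : Ω) :
    |recoveryPayment ts Z τ ω| ≤ ∑ i, C i := by
  refine (Finset.abs_sum_le_sum_abs _ _).trans (Finset.sum_le_sum fun i _ => ?_)
  rw [abs_mul]
  split_ifs <;> simp [hZ_bdd i ω, (abs_nonneg _).trans (hZ_bdd i ω)]

variable [MeasurableSpace Ω]

lemma measurable_recoveryPayment (hτ : Measurable τ) (hZ : ∀ i, Measurable (Z i)) :
    Measurable (recoveryPayment ts Z τ) :=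
  Finset.measurable_sum _ fun i _ => (hZ i).mul <|
    .ite ((hτ measurableSet_Ioi).inter (hτ measurableSet_Iic)) measurable_const measurable_const

end RecoveryPayment

section DriftIdentity

variable {Ω : Type*} [m0 : MeasurableSpace Ω] {P : Measure Ω} {n : ℕ}
  {ts : Fin (n + 2) → ℝ≥0} {Z : Fin (n + 1) → Ω → ℝ} {τ : Ω → ℝ≥0}

variable (P) in
def azemaStepIntegral (F : Filtration ℝ≥0 m0) (ts : Fin (n + 2) → ℝ≥0)
    (Z : Fin (n + 1) → Ω → ℝ) (τ : Ω → ℝ≥0) : Ω → ℝ :=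
  fun ω => ∑ i, Z i ω * (azema P F τ (ts i.succ) ω - azema P F τ (ts i.castSucc) ω)

variable (F : Filtration ℝ≥0 m0)

lemma integrable_azemaStepIntegral (hZ : ∀ i, Measurable (Z i)) {C : Fin (n + 1) → ℝ}
    (hZ_bdd : ∀ i ω, |Z i ω| ≤ C i) : Integrable (azemaStepIntegral P F ts Z τ) P :=
  integrable_finsetSum _ fun i _ => integrable_mul_of_abs_le (hZ i) (hZ_bdd i)
    (integrable_condExp.sub integrable_condExp)

variable [IsFiniteMeasure P]

lemma integrable_recoveryPayment (hτ : Measurable τ) (hts : Monotone ts)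
    (hZ : ∀ i, Measurable (Z i)) {C : Fin (n + 1) → ℝ} (hZ_bdd : ∀ i ω, |Z i ω| ≤ C i) :
    Integrable (recoveryPayment ts Z τ) P := by
  rw [recoveryPayment_eq_sum_survival hts]
  exact integrable_finsetSum _ fun i _ => integrable_mul_of_abs_le (hZ i) (hZ_bdd i)
    ((integrable_survival hτ _).sub (integrable_survival hτ _))

theorem condExp_recoveryPayment_add_azemaStepIntegral_ae_eq_zero (hτ : Measurable τ)
    (hts : Monotone ts) {s : ℝ≥0} (hs : s ≤ ts 0)
    (hZ_meas : ∀ i, Measurable[F (ts i.castSucc)] (Z i)) {C : Fin (n + 1) → ℝ}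
    (hZ_bdd : ∀ i ω, |Z i ω| ≤ C i) :
    P[recoveryPayment ts Z τ + azemaStepIntegral P F ts Z τ|F s] =ᵐ[P] 0 := by
  set D : ℝ≥0 → Ω → ℝ := fun u ω => survival τ u ω - azema P F τ u ω
  have hZ : ∀ i, Measurable (Z i) := fun i => (hZ_meas i).mono (F.le _) le_rfl
  have hZD_int : ∀ i u, Integrable (fun ω => Z i ω * D u ω) P := fun i u =>
    integrable_mul_of_abs_le (hZ i) (hZ_bdd i) ((integrable_survival hτ u).sub integrable_condExp)
  have hZD : ∀ i u, ts i.castSucc ≤ u → P[fun ω => Z i ω * D u ω|F s] =ᵐ[P] 0 :=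
    fun i u hu => condExp_mul_sub_condExp_ae_eq_zero
      (F.mono (hs.trans ((hts (Fin.zero_le _)).trans hu))) (F.le u)
      ((hZ_meas i).mono (F.mono hu) le_rfl).stronglyMeasurable (hZ_bdd i)
      (integrable_survival hτ u)
  have hterm : ∀ i, P[fun ω => Z i ω * D (ts i.castSucc) ω - Z i ω * D (ts i.succ) ω|F s]
      =ᵐ[P] 0 := fun i => by
    filter_upwards [condExp_sub (hZD_int i _) (hZD_int i _) (F s),
      hZD i _ le_rfl, hZD i _ (hts (Fin.castSucc_le_succ i))] with ω h h₁ h₂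
    exact h.trans (by rw [Pi.sub_apply, h₁, h₂, sub_self, Pi.zero_apply])
  have hsum : recoveryPayment ts Z τ + azemaStepIntegral P F ts Z τ =
      ∑ i, fun ω => Z i ω * D (ts i.castSucc) ω - Z i ω * D (ts i.succ) ω := by
    rw [recoveryPayment_eq_sum_survival hts]
    ext ω
    simp only [azemaStepIntegral, D, Pi.add_apply, Finset.sum_apply, ← Finset.sum_add_distrib]
    exact Finset.sum_congr rfl fun i _ => by ring
  rw [hsum]
  filter_upwards [condExp_finsetSum (fun i _ => (hZD_int i _).sub (hZD_int i _)) (F s),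
    ae_all_iff.2 hterm] with ω h hi
  exact h.trans (by rw [Finset.sum_apply]; exact Finset.sum_eq_zero fun i _ => hi i)

theorem condExp_recoveryPayment_ae_eq_neg (hτ : Measurable τ) (hts : Monotone ts) {s : ℝ≥0}
    (hs : s ≤ ts 0) (hZ_meas : ∀ i, Measurable[F (ts i.castSucc)] (Z i))
    {C : Fin (n + 1) → ℝ} (hZ_bdd : ∀ i ω, |Z i ω| ≤ C i) :
    P[recoveryPayment ts Z τ|F s] =ᵐ[P] -P[azemaStepIntegral P F ts Z τ|F s] := by
  have hZ : ∀ i, Measurable (Z i) := fun i => (hZ_meas i).mono (F.le _) le_rfl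
  filter_upwards [condExp_add (integrable_recoveryPayment hτ hts hZ hZ_bdd)
    (integrable_azemaStepIntegral F hZ hZ_bdd) (F s),
    condExp_recoveryPayment_add_azemaStepIntegral_ae_eq_zero F hτ hts hs hZ_meas hZ_bdd]
    with ω h h₀
  rw [Pi.neg_apply, eq_neg_iff_add_eq_zero, ← Pi.add_apply, ← h, h₀, Pi.zero_apply]

end DriftIdentity

theorem progressive_information_recovery_term_general
    {Ω : Type*} [m0 : MeasurableSpace Ω] {P : Measure Ω} [IsProbabilityMeasure P]
    (F : Filtration ℝ≥0 m0)
    (X : ℝ≥0 → Ω → ℝ) (hX_adapted : Adapted F X)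
    (hX_cont : ∀ ω, Continuous fun s => X s ω)
    (L : Ω → ℝ) (hL : Measurable L)
    (τ : Ω → ℝ≥0)
    (hτ : ∀ (θ : ℝ≥0) (ω : Ω), θ < τ ω ↔ L ω < runInf X θ ω)
    -- the partition `t = t_0 < t_1 < ⋯ < t_{n+1} = T` and the stepwise recovery payments
    (n : ℕ) (ts : Fin (n + 2) → ℝ≥0) (hts : StrictMono ts)
    (t : ℝ≥0) (hts0 : ts 0 = t)
    (Z : Fin (n + 1) → Ω → ℝ)
    (hZ_meas : ∀ i, Measurable[F (ts i.castSucc)] (Z i))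
    (hZ_bdd : ∀ i, ∃ C, ∀ ω, |Z i ω| ≤ C) :
    P {ω | t < τ ω ∧ azema P F τ t ω = 0} = 0 ∧
    (P[fun ω => ∑ i : Fin (n + 1),
        Z i ω * (if ts i.castSucc < τ ω ∧ τ ω ≤ ts i.succ then 1 else 0)|
          F t ⊔ defaultSigma τ t]) =ᵐ[P]
      fun ω => if t < τ ω then
        -((P[fun ω' => ∑ i : Fin (n + 1),
            Z i ω' * (azema P F τ (ts i.succ) ω' - azema P F τ (ts i.castSucc) ω')|F t]) ω
          / azema P F τ t ω)
      else 0 := by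
  have hτ_meas : Measurable τ := measurable_of_lt_iff_lt_runInf
    (fun s => (hX_adapted s).mono (F.le s) le_rfl) hX_cont hL hτ
  refine ⟨measure_lt_and_azema_eq_zero F hτ_meas t, ?_⟩
  choose C hC using hZ_bdd
  have hY_meas : Measurable (recoveryPayment ts Z τ) :=
    measurable_recoveryPayment hτ_meas fun i => (hZ_meas i).mono (F.le _) le_rfl
  have hkey := condExp_sup_defaultSigma_ae_eq (P := P) (F.le t) hτ_meas hY_meas
    (abs_recoveryPayment_le hC) fun ω hω => recoveryPayment_eq_zero_of_le hts.monotone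
      (hω.trans hts0.ge)
  refine hkey.trans ?_
  filter_upwards [condExp_recoveryPayment_ae_eq_neg F hτ_meas hts.monotone hts0.ge hZ_meas hC]
    with ω h_drift
  split_ifs
  · rw [h_drift, Pi.neg_apply, neg_div]
    rfl
  · rfl

/-- **Recovery-payment term of Proposition 4.1.** For a partition
`t = t_0 < t_1 < ⋯ < t_{n+1} = T` and bounded `F_{t_i}`-measurable `Z_i`, `P`-a.s.,
`E_P[Σ_i Z_i 1_{t_i < τ ≤ t_{i+1}} | G_t] = − 1_{τ > t} E_P[Σ_i Z_i (S_{t_{i+1}} − S_{t_i})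
| F_t] / S_t` (the right-hand side being `0` on `{τ ≤ t}`, and
`P(τ > t, S_t = 0) = 0`). -/
theorem progressive_information_recovery_term
    {Ω : Type*} [m0 : MeasurableSpace Ω] {P : Measure Ω} [IsProbabilityMeasure P]
    (F : Filtration ℝ≥0 m0)
    (X : ℝ≥0 → Ω → ℝ) (hX_adapted : Adapted F X)
    (hX_cont : ∀ ω, Continuous fun s => X s ω)
    (L : Ω → ℝ) (hL : Measurable L)
    (hX0 : ∀ᵐ ω ∂P, L ω < X 0 ω)
    (τ : Ω → ℝ≥0)
    (hτ : ∀ (θ : ℝ≥0) (ω : Ω), θ < τ ω ↔ L ω < runInf X θ ω)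
    -- the partition `t = t_0 < t_1 < ⋯ < t_{n+1} = T` and the stepwise recovery payments
    (n : ℕ) (ts : Fin (n + 2) → ℝ≥0) (hts : StrictMono ts)
    (t T : ℝ≥0) (hts0 : ts 0 = t) (htsT : ts (Fin.last (n + 1)) = T)
    (Z : Fin (n + 1) → Ω → ℝ)
    (hZ_meas : ∀ i, Measurable[F (ts i.castSucc)] (Z i))
    (hZ_bdd : ∀ i, ∃ C, ∀ ω, |Z i ω| ≤ C) :
    P {ω | t < τ ω ∧ azema P F τ t ω = 0} = 0 ∧
    (P[fun ω => ∑ i : Fin (n + 1),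
        Z i ω * (if ts i.castSucc < τ ω ∧ τ ω ≤ ts i.succ then 1 else 0)|
          F t ⊔ defaultSigma τ t]) =ᵐ[P]
      fun ω => if t < τ ω then
        -((P[fun ω' => ∑ i : Fin (n + 1),
            Z i ω' * (azema P F τ (ts i.succ) ω' - azema P F τ (ts i.castSucc) ω')|F t]) ω
          / azema P F τ t ω)
      else 0 :=
  progressive_information_recovery_term_general (m0 := m0) F X hX_adapted hX_cont L hL τ hτ n ts hts
    t hts0 Z hZ_meas hZ_bdd
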